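/- If Sieve fails, a bad cycle exists: let G be a finite directed graph with edge labels Dec, Inc. If the Sieve procedure terminates with a graph still containing a cycle, then the original graph G contains a cycle such that every variable decremented by some edge of the cycle is also incremented by some edge of the cycle. -/

import Mathlib

/-- One-step reachability along the edges of the subgraph `H`. -/
def sieveReach {V ι : Type*} (src tgt : ι → V) (H : Finset ι) : V → V → Prop :=
  Relation.ReflTransGen (fun a b => ∃ e ∈ H, src e = a ∧ tgt e = b)

/-- Edge `e` lies inside a strongly connected component of the subgraph `H`:
it belongs to `H` and its endpoints are mutually reachable in `H`. -/
def sieveInside {V ι : Type*} (src tgt : ι → V) (H : Finset ι) (e : ι) : Prop :=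
  e ∈ H ∧ sieveReach src tgt H (tgt e) (src e)

/-- Edges `e` and `e'` lie inside the same strongly connected component of `H`. -/
def sieveSameC {V ι : Type*} (src tgt : ι → V) (H : Finset ι) (e e' : ι) : Prop :=
  sieveInside src tgt H e ∧ sieveInside src tgt H e' ∧
    sieveReach src tgt H (src e) (src e') ∧ sieveReach src tgt H (src e') (src e)

/-- One iteration of the Sieve procedure: pick an SCC `C` (the component of an edge `e₀`)
and a variable `X` decremented by some edge inside `C` and incremented by no edge inside
`C`; remove all edges inside `C` that decrement `X`. -/
def sieveStep {V ι Var : Type*} (src tgt : ι → V) (Dec Inc : ι → Finset Var)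
    (H H' : Finset ι) : Prop :=
  ∃ (X : Var) (e₀ : ι), sieveInside src tgt H e₀ ∧ X ∈ Dec e₀ ∧
    (∀ e, sieveSameC src tgt H e₀ e → X ∉ Inc e) ∧
    (∀ e, e ∈ H' ↔ e ∈ H ∧ ¬ (sieveSameC src tgt H e₀ e ∧ X ∈ Dec e))


/-!
Take an edge `e₀` that still lies on a cycle of the final graph and let `C` be its strongly
connected component. Since Sieve is stuck, every variable decremented by an edge of `C` is
incremented by some edge of `C`. As `C` is strongly connected and finite, one closed walk
through `src e₀` traverses every edge of `C`; repeated forever, it is the bad cycle.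
-/

/-- A path between two vertices of the strongly connected component of `v` stays inside it. -/
theorem Relation.ReflTransGen.restrict_component {α : Type*} {r : α → α → Prop} {v a b : α}
    (hab : ReflTransGen r a b) (hva : ReflTransGen r v a) (hbv : ReflTransGen r b v) :
    ReflTransGen (fun x y => r x y ∧ ReflTransGen r v x ∧ ReflTransGen r y v) a b := by
  induction hab with
  | refl => exact .refl
  | tail hac hcb ih =>
      exact (ih (.head hcb hbv)).tail ⟨hcb, hva.trans hac, hbv⟩

section Walk

variable {V ι : Type*} (src tgt : ι → V)

def IsEdgeWalk (T : Set ι) : List ι → V → V → Prop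
  | [], a, b => a = b
  | e :: L, a, b => e ∈ T ∧ src e = a ∧ IsEdgeWalk T L (tgt e) b

variable {src tgt} {T : Set ι}

theorem IsEdgeWalk.append : ∀ {L M : List ι} {a b c : V},
    IsEdgeWalk src tgt T L a b → IsEdgeWalk src tgt T M b c →
      IsEdgeWalk src tgt T (L ++ M) a c
  | [], _, _, _, _, rfl, hM => hM
  | _ :: _, _, _, _, _, ⟨he, hsrc, hL⟩, hM => ⟨he, hsrc, hL.append hM⟩

theorem IsEdgeWalk.mem : ∀ {L : List ι} {a b : V},
    IsEdgeWalk src tgt T L a b → ∀ e ∈ L, e ∈ T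
  | [], _, _, _, _, he => by simp at he
  | _ :: _, _, _, ⟨he, _, hL⟩, _, hf => by
      rcases List.mem_cons.1 hf with rfl | hf
      exacts [he, hL.mem _ hf]

theorem exists_isEdgeWalk_of_reflTransGen {a b : V}
    (h : Relation.ReflTransGen (fun x y => ∃ e ∈ T, src e = x ∧ tgt e = y) a b) :
    ∃ L, IsEdgeWalk src tgt T L a b := by
  induction h using Relation.ReflTransGen.head_induction_on with
  | refl => exact ⟨[], rfl⟩
  | head hstep _ ih =>
      obtain ⟨e, he, rfl, rfl⟩ := hstep
      obtain ⟨L, hL⟩ := ih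
      exact ⟨e :: L, he, rfl, hL⟩

theorem IsEdgeWalk.rotate {L : List ι} {a : V} (hL : IsEdgeWalk src tgt T L a a) (n : ℕ) :
    ∃ b, IsEdgeWalk src tgt T (L.rotate n) b b := by
  induction n with
  | zero => exact ⟨a, by simpa using hL⟩
  | succ n ih =>
      obtain ⟨b, hb⟩ := ih
      rw [← List.rotate_rotate]
      rcases hM : L.rotate n with _ | ⟨e, M⟩
      · exact ⟨b, by simpa [hM] using hb⟩
      · rw [hM] at hb
        have he : IsEdgeWalk src tgt T [e] b (tgt e) := ⟨hb.1, hb.2.1, rfl⟩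
        exact ⟨tgt e, by simpa using hb.2.2.append he⟩

theorem IsEdgeWalk.tgt_head_eq_src_head_rotate_one {L : List ι} {a : V}
    (hL : IsEdgeWalk src tgt T L a a) (h₀ : 0 < L.length) :
    tgt L[0] = src ((L.rotate 1)[0]'(by simpa using h₀)) := by
  rcases L with _ | ⟨e, _ | ⟨f, M⟩⟩
  · simp at h₀
  · simpa using hL.2.2.trans hL.2.1.symm
  · simpa using hL.2.2.2.1.symm

theorem IsEdgeWalk.exists_periodic {L : List ι} {a : V} (hL : IsEdgeWalk src tgt T L a a)
    (hne : L ≠ []) :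
    ∃ k, 0 < k ∧ ∃ c : ℕ → ι, (∀ i, c (i + k) = c i) ∧ (∀ i, tgt (c i) = src (c (i + 1))) ∧
      ∀ e, e ∈ L ↔ ∃ i, c i = e := by
  have hk : 0 < L.length := List.length_pos_iff.2 hne
  refine ⟨L.length, hk, fun i => L[i % L.length]'(Nat.mod_lt _ hk), fun i => by simp, ?_, ?_⟩
  · intro i
    obtain ⟨b, hb⟩ := hL.rotate i
    have := hb.tgt_head_eq_src_head_rotate_one (by simpa using hk)
    simpa [List.rotate_rotate] using this
  · refine fun e => ⟨fun he => ?_, fun ⟨i, hi⟩ => hi ▸ List.getElem_mem _⟩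
    obtain ⟨i, hi, rfl⟩ := List.getElem_of_mem he
    exact ⟨i, by simp [Nat.mod_eq_of_lt hi]⟩

theorem exists_isEdgeWalk_forall_mem {v : V} (S : Finset ι)
    (hS : ∀ e ∈ S, ∃ L, IsEdgeWalk src tgt T L v v ∧ e ∈ L) :
    ∃ L, IsEdgeWalk src tgt T L v v ∧ ∀ e ∈ S, e ∈ L := by
  induction S using Finset.cons_induction with
  | empty => exact ⟨[], rfl, by simp⟩
  | cons e S _ ih =>
      obtain ⟨L, hL, hSL⟩ := ih fun f hf => hS f (Finset.mem_cons_of_mem hf)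
      obtain ⟨M, hM, heM⟩ := hS e (Finset.mem_cons_self e S)
      refine ⟨M ++ L, hM.append hL, ?_⟩
      simp only [Finset.mem_cons, forall_eq_or_imp, List.mem_append]
      exact ⟨Or.inl heM, fun f hf => Or.inr (hSL f hf)⟩

end Walk

section Sieve

variable {V ι Var : Type*} {src tgt : ι → V} {H : Finset ι}

theorem sieveSameC_refl {e : ι} (h : sieveInside src tgt H e) : sieveSameC src tgt H e e :=
  ⟨h, h, .refl, .refl⟩

theorem sieveSameC_trans {e₁ e₂ e₃ : ι} (h₁₂ : sieveSameC src tgt H e₁ e₂)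
    (h₂₃ : sieveSameC src tgt H e₂ e₃) : sieveSameC src tgt H e₁ e₃ :=
  ⟨h₁₂.1, h₂₃.2.1, h₁₂.2.2.1.trans h₂₃.2.2.1, h₂₃.2.2.2.trans h₁₂.2.2.2⟩

theorem exists_isEdgeWalk_sieveSameC {e₀ : ι} (h₀ : sieveInside src tgt H e₀) {a b : V}
    (hab : sieveReach src tgt H a b) (hva : sieveReach src tgt H (src e₀) a)
    (hbv : sieveReach src tgt H b (src e₀)) :
    ∃ L, IsEdgeWalk src tgt {f | sieveSameC src tgt H e₀ f} L a b := by
  refine exists_isEdgeWalk_of_reflTransGen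
    (Relation.ReflTransGen.mono ?_ _ _ (hab.restrict_component hva hbv))
  rintro x y ⟨⟨f, hf, rfl, rfl⟩, hvx, hyv⟩
  exact ⟨f, ⟨h₀, ⟨hf, hyv.trans hvx⟩, hvx,
    (Relation.ReflTransGen.single ⟨f, hf, rfl, rfl⟩).trans hyv⟩, rfl, rfl⟩

theorem exists_closed_walk_sieveSameC {e₀ e : ι} (h : sieveSameC src tgt H e₀ e) :
    ∃ L, IsEdgeWalk src tgt {f | sieveSameC src tgt H e₀ f} L (src e₀) (src e₀) ∧ e ∈ L := by
  have ⟨h₀, ⟨heH, htgt⟩, hto, hfrom⟩ := h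
  have hedge : sieveReach src tgt H (src e) (tgt e) := .single ⟨e, heH, rfl, rfl⟩
  obtain ⟨P, hP⟩ := exists_isEdgeWalk_sieveSameC h₀ hto .refl hfrom
  obtain ⟨Q, hQ⟩ := exists_isEdgeWalk_sieveSameC h₀ (htgt.trans hfrom) (hto.trans hedge) .refl
  exact ⟨P ++ e :: Q, hP.append ⟨h, rfl, hQ⟩, by simp⟩

theorem exists_inc_of_forall_not_sieveStep {Dec Inc : ι → Finset Var}
    (hstuck : ∀ H', ¬ sieveStep src tgt Dec Inc H H') {X : Var} {e₁ : ι}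
    (h₁ : sieveInside src tgt H e₁) (hX : X ∈ Dec e₁) :
    ∃ e, sieveSameC src tgt H e₁ e ∧ X ∈ Inc e := by
  classical
  by_contra! hnone
  exact hstuck (H.filter fun e => ¬ (sieveSameC src tgt H e₁ e ∧ X ∈ Dec e))
    ⟨X, e₁, h₁, hX, hnone, fun e => Finset.mem_filter⟩

end Sieve

theorem stmt9_general {V ι Var : Type*}
    (src tgt : ι → V) (Dec Inc : ι → Finset Var)
    (n : ℕ) (H : ℕ → Finset ι)
    (hstuck : ∀ H' : Finset ι, ¬ sieveStep src tgt Dec Inc (H n) H')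
    (hcyclic : ∃ e : ι, sieveInside src tgt (H n) e) :
    ∃ (k : ℕ), 0 < k ∧ ∃ c : ℕ → ι, (∀ i, c (i + k) = c i) ∧
      (∀ i, tgt (c i) = src (c (i + 1))) ∧
      ∀ X : Var, (∃ i, X ∈ Dec (c i)) → ∃ j, X ∈ Inc (c j) := by
  classical
  obtain ⟨e₀, h₀⟩ := hcyclic
  let C := (H n).filter (sieveSameC src tgt (H n) e₀)
  obtain ⟨L, hL, hCL⟩ := exists_isEdgeWalk_forall_mem C
    fun e he => exists_closed_walk_sieveSameC (Finset.mem_filter.1 he).2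
  have he₀L : e₀ ∈ L := hCL e₀ (Finset.mem_filter.2 ⟨h₀.1, sieveSameC_refl h₀⟩)
  obtain ⟨k, hk, c, hper, hchain, hcL⟩ := hL.exists_periodic (List.ne_nil_of_mem he₀L)
  refine ⟨k, hk, c, hper, hchain, ?_⟩
  rintro X ⟨i, hX⟩
  have hci : sieveSameC src tgt (H n) e₀ (c i) := hL.mem _ ((hcL _).2 ⟨i, rfl⟩)
  obtain ⟨e, hse, hinc⟩ := exists_inc_of_forall_not_sieveStep hstuck hci.2.1 hX
  obtain ⟨j, rfl⟩ := (hcL e).1 (hCL e (Finset.mem_filter.2 ⟨hse.2.1.1, sieveSameC_trans hci hse⟩))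
  exact ⟨j, hinc⟩

/-- If Sieve fails, a bad cycle exists. If the Sieve procedure (run from
the full edge set) terminates with a graph that still contains a cycle (some edge lies
inside an SCC), then the original graph contains a cycle such that every variable
decremented by some edge of the cycle is also incremented by some edge of the cycle. -/
theorem stmt9 {V ι Var : Type*} [Fintype V] [Fintype ι] [Fintype Var]
    (src tgt : ι → V) (Dec Inc : ι → Finset Var)
    (n : ℕ) (H : ℕ → Finset ι) (h0 : H 0 = Finset.univ)
    (hstep : ∀ i < n, sieveStep src tgt Dec Inc (H i) (H (i + 1)))
    (hstuck : ∀ H' : Finset ι, ¬ sieveStep src tgt Dec Inc (H n) H')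
    (hcyclic : ∃ e : ι, sieveInside src tgt (H n) e) :
    ∃ (k : ℕ), 0 < k ∧ ∃ c : ℕ → ι, (∀ i, c (i + k) = c i) ∧
      (∀ i, tgt (c i) = src (c (i + 1))) ∧
      ∀ X : Var, (∃ i, X ∈ Dec (c i)) → ∃ j, X ∈ Inc (c j) :=
  stmt9_general src tgt Dec Inc n H hstuck hcyclic
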